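/- On X = Q[ã_i, b̃_i] ⊗ Λ[a_i, b_i], let Δ = Σ_j ∂_{b_j}∂_{a_j} and h = Σ_j (a_j ∂_{ã_j} + b_j ∂_{b̃_j}). Then the commutator [h, Δ] equals Σ_j (∂_{a_j}∂_{b̃_j} − ∂_{b_j}∂_{ã_j}), and consequently [[h,Δ],Δ] = 0, i.e., Δ h Δ = (1/2)(Δ² h + h Δ²). -/

import Mathlib

/-! A concrete model of the bigraded algebra
`X = ℚ[ã_1,…,ã_g,b̃_1,…,b̃_g] ⊗ Λ[a_1,…,a_g,b_1,…,b_g]`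
with its monomial basis, together with the operators
`δ = Σ_j (ã_j ∂_{a_j} + b̃_j ∂_{b_j})`, `h = Σ_j (a_j ∂_{ã_j} + b_j ∂_{b̃_j})` and
`Δ = Σ_j ∂_{b_j} ∂_{a_j}`.  Exterior monomials are ordered `a_1 < ⋯ < a_g < b_1 < ⋯ < b_g`
and the graded partial derivatives carry the corresponding Koszul signs. -/

/-- A monomial of `X`: exponents of the polynomial generators `ã_j`, `b̃_j` and the
sets of exterior generators `a_j`, `b_j` occurring. -/
structure Mon (g : ℕ) where
  ea : Fin g → ℕ
  eb : Fin g → ℕ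
  sa : Finset (Fin g)
  sb : Finset (Fin g)
deriving DecidableEq

/-- The underlying vector space of `X`, with basis the monomials. -/
abbrev XAlg (g : ℕ) := Mon g →₀ ℚ

noncomputable section

namespace Mon

/-- Basis vector corresponding to a monomial. -/
def bas {g : ℕ} (m : Mon g) : XAlg g := Finsupp.single m 1

/-- Extend a map on monomials to a linear endomorphism of `X`. -/
def lift1 {g : ℕ} (f : Mon g → XAlg g) : XAlg g →ₗ[ℚ] XAlg g :=
  Finsupp.lift (XAlg g) ℚ (Mon g) f

/-- Koszul sign for (removing or inserting) `a_j` in the exterior monomial with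
`a`-part `A`. -/
def sgnA {g : ℕ} (A : Finset (Fin g)) (j : Fin g) : ℚ :=
  (-1 : ℚ) ^ (A.filter (fun i => i < j)).card

/-- Koszul sign for (removing or inserting) `b_j` in the exterior monomial with
`a`-part `A` and `b`-part `B`. -/
def sgnB {g : ℕ} (A B : Finset (Fin g)) (j : Fin g) : ℚ :=
  (-1 : ℚ) ^ (A.card + (B.filter (fun i => i < j)).card)

/-- The odd partial derivative `∂_{a_j}`. -/
def dA {g : ℕ} (j : Fin g) : XAlg g →ₗ[ℚ] XAlg g :=
  lift1 (fun m => if j ∈ m.sa then sgnA m.sa j • bas ⟨m.ea, m.eb, m.sa.erase j, m.sb⟩ else 0)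

/-- The odd partial derivative `∂_{b_j}`. -/
def dB {g : ℕ} (j : Fin g) : XAlg g →ₗ[ℚ] XAlg g :=
  lift1 (fun m => if j ∈ m.sb then sgnB m.sa m.sb j • bas ⟨m.ea, m.eb, m.sa, m.sb.erase j⟩ else 0)

/-- Multiplication by `a_j`. -/
def mA {g : ℕ} (j : Fin g) : XAlg g →ₗ[ℚ] XAlg g :=
  lift1 (fun m => if j ∈ m.sa then 0 else sgnA m.sa j • bas ⟨m.ea, m.eb, insert j m.sa, m.sb⟩)

/-- Multiplication by `b_j`. -/
def mB {g : ℕ} (j : Fin g) : XAlg g →ₗ[ℚ] XAlg g :=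
  lift1 (fun m => if j ∈ m.sb then 0 else sgnB m.sa m.sb j • bas ⟨m.ea, m.eb, m.sa, insert j m.sb⟩)

/-- Multiplication by `ã_j`. -/
def mtA {g : ℕ} (j : Fin g) : XAlg g →ₗ[ℚ] XAlg g :=
  lift1 (fun m => bas ⟨Function.update m.ea j (m.ea j + 1), m.eb, m.sa, m.sb⟩)

/-- Multiplication by `b̃_j`. -/
def mtB {g : ℕ} (j : Fin g) : XAlg g →ₗ[ℚ] XAlg g :=
  lift1 (fun m => bas ⟨m.ea, Function.update m.eb j (m.eb j + 1), m.sa, m.sb⟩)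

/-- The (even) partial derivative `∂_{ã_j}`. -/
def dtA {g : ℕ} (j : Fin g) : XAlg g →ₗ[ℚ] XAlg g :=
  lift1 (fun m => (m.ea j : ℚ) • bas ⟨Function.update m.ea j (m.ea j - 1), m.eb, m.sa, m.sb⟩)

/-- The (even) partial derivative `∂_{b̃_j}`. -/
def dtB {g : ℕ} (j : Fin g) : XAlg g →ₗ[ℚ] XAlg g :=
  lift1 (fun m => (m.eb j : ℚ) • bas ⟨m.ea, Function.update m.eb j (m.eb j - 1), m.sa, m.sb⟩)

/-- The operator `δ = Σ_j (ã_j ∂_{a_j} + b̃_j ∂_{b_j})`. -/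
def δop (g : ℕ) : XAlg g →ₗ[ℚ] XAlg g :=
  ∑ j : Fin g, (mtA j ∘ₗ dA j + mtB j ∘ₗ dB j)

/-- The operator `h = Σ_j (a_j ∂_{ã_j} + b_j ∂_{b̃_j})`. -/
def hop (g : ℕ) : XAlg g →ₗ[ℚ] XAlg g :=
  ∑ j : Fin g, (mA j ∘ₗ dtA j + mB j ∘ₗ dtB j)

/-- The operator `Δ = Σ_j ∂_{b_j} ∂_{a_j}`. -/
def Δop (g : ℕ) : XAlg g →ₗ[ℚ] XAlg g :=
  ∑ j : Fin g, dB j ∘ₗ dA j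

/-- The total polynomial degree of a monomial (the number of generators occurring,
counted with multiplicity). -/
def polyDeg {g : ℕ} (m : Mon g) : ℕ :=
  (∑ j, m.ea j) + (∑ j, m.eb j) + m.sa.card + m.sb.card

/-- The homological degree of a monomial (`|ã_j| = |b̃_j| = 2`, `|a_j| = |b_j| = 1`). -/
def homDeg {g : ℕ} (m : Mon g) : ℕ :=
  2 * ((∑ j, m.ea j) + (∑ j, m.eb j)) + m.sa.card + m.sb.card

/-- The constant monomial `1`. -/
def one (g : ℕ) : Mon g := ⟨fun _ => 0, fun _ => 0, ∅, ∅⟩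

end Mon
end

/-! The generators satisfy the canonical (anti)commutation relations: the odd derivatives
`∂_{a_j}`, `∂_{b_j}` pairwise anticommute, `{∂_{a_j}, a_k} = {∂_{b_j}, b_k} = δ_{jk}`,
`{∂_{a_j}, b_k} = {∂_{b_j}, a_k} = 0`, and the even derivatives `∂_{ã_k}`, `∂_{b̃_k}` commute
with all odd derivatives. The graded Leibniz rule then gives
`[a_k ∂_{ã_k} + b_k ∂_{b̃_k}, ∂_{b_j} ∂_{a_j}] = δ_{jk} (∂_{a_j} ∂_{b̃_j} − ∂_{b_j} ∂_{ã_j})`.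
In each summand of `[h, Δ]` the odd factor anticommutes with both factors of `∂_{b_k} ∂_{a_k}`,
so commutes with it, and the even factor commutes with it as well; hence `[[h, Δ], Δ] = 0`,
which expands to `2 Δ h Δ = Δ² h + h Δ²`. -/

lemma commute_mul_of_anticommute {R : Type*} [Ring R] {x y z : R}
    (hy : x * y + y * x = 0) (hz : x * z + z * x = 0) : Commute x (y * z) := by
  rw [Commute, SemiconjBy, ← mul_assoc, eq_neg_of_add_eq_zero_left hy, neg_mul, mul_assoc,
    eq_neg_of_add_eq_zero_left hz, mul_neg, neg_neg, mul_assoc]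

/-- Graded Leibniz rule, for `u`, `x`, `y` odd and `p` even, commuting with `x` and `y`. -/
lemma mul_mul_sub_mul_mul_of_commute {R : Type*} [Ring R] {u p y x : R}
    (hy : Commute p y) (hx : Commute p x) :
    u * p * (y * x) - y * x * (u * p) = ((y * u + u * y) * x - y * (x * u + u * x)) * p := by
  have hyx : p * (y * x) = y * x * p := (hy.mul_right hx).eq
  calc u * p * (y * x) - y * x * (u * p) = u * (p * (y * x)) - y * x * u * p := by noncomm_ring
    _ = _ := by rw [hyx]; noncomm_ring

lemma mul_mul_eq_half_smul_of_commute {R : Type*} [Ring R] [Module ℚ R] {h Δ : R}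
    (hc : Commute (h * Δ - Δ * h) Δ) :
    Δ * (h * Δ) = (1 / 2 : ℚ) • (Δ * (Δ * h) + h * (Δ * Δ)) := by
  have hsum : Δ * (Δ * h) + h * (Δ * Δ) = (2 : ℚ) • (Δ * (h * Δ)) := by
    have := hc.eq
    simp only [sub_mul, mul_sub, mul_assoc] at this
    rw [sub_eq_sub_iff_add_eq_add] at this
    rw [two_smul, add_comm, this]
  rw [hsum, smul_smul]
  norm_num

namespace Mon
variable {g : ℕ}

lemma lift1_bas (f : Mon g → XAlg g) (m : Mon g) : lift1 f (bas m) = f m := by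
  simp [lift1, bas]

lemma ext_bas {f f' : Module.End ℚ (XAlg g)} (h : ∀ m, f (bas m) = f' (bas m)) : f = f' :=
  Finsupp.lhom_ext' fun m => LinearMap.ext_ring (h m)

@[simp] lemma dA_bas (j : Fin g) (m : Mon g) :
    dA j (bas m) =
      if j ∈ m.sa then sgnA m.sa j • bas ⟨m.ea, m.eb, m.sa.erase j, m.sb⟩ else 0 :=
  lift1_bas _ _

@[simp] lemma dB_bas (j : Fin g) (m : Mon g) :
    dB j (bas m) =
      if j ∈ m.sb then sgnB m.sa m.sb j • bas ⟨m.ea, m.eb, m.sa, m.sb.erase j⟩ else 0 :=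
  lift1_bas _ _

@[simp] lemma mA_bas (j : Fin g) (m : Mon g) :
    mA j (bas m) =
      if j ∈ m.sa then 0 else sgnA m.sa j • bas ⟨m.ea, m.eb, insert j m.sa, m.sb⟩ :=
  lift1_bas _ _

@[simp] lemma mB_bas (j : Fin g) (m : Mon g) :
    mB j (bas m) =
      if j ∈ m.sb then 0 else sgnB m.sa m.sb j • bas ⟨m.ea, m.eb, m.sa, insert j m.sb⟩ :=
  lift1_bas _ _

@[simp] lemma dtA_bas (j : Fin g) (m : Mon g) :
    dtA j (bas m) = (m.ea j : ℚ) • bas ⟨Function.update m.ea j (m.ea j - 1), m.eb, m.sa, m.sb⟩ :=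
  lift1_bas _ _

@[simp] lemma dtB_bas (j : Fin g) (m : Mon g) :
    dtB j (bas m) = (m.eb j : ℚ) • bas ⟨m.ea, Function.update m.eb j (m.eb j - 1), m.sa, m.sb⟩ :=
  lift1_bas _ _

@[simp] lemma sgnA_mul_self (A : Finset (Fin g)) (j : Fin g) : sgnA A j * sgnA A j = 1 := by
  rw [sgnA, ← pow_add, Even.neg_one_pow ⟨_, rfl⟩]

@[simp] lemma sgnA_erase_self (A : Finset (Fin g)) (j : Fin g) :
    sgnA (A.erase j) j = sgnA A j := by
  simp [sgnA, Finset.filter_erase]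

@[simp] lemma sgnA_insert_self (A : Finset (Fin g)) (j : Fin g) :
    sgnA (insert j A) j = sgnA A j := by
  simp [sgnA, Finset.filter_insert]

lemma sgnA_insert (A : Finset (Fin g)) {j k : Fin g} (hk : k ∉ A) :
    sgnA (insert k A) j = (if k < j then -1 else 1) * sgnA A j := by
  rw [sgnA, sgnA, Finset.filter_insert]
  split_ifs with h
  · rw [Finset.card_insert_of_notMem (fun hc => hk (Finset.mem_filter.1 hc).1), pow_succ,
      neg_one_mul, mul_neg_one]
  · rw [one_mul]

lemma sgnA_erase (A : Finset (Fin g)) {j k : Fin g} (hk : k ∈ A) :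
    sgnA (A.erase k) j = (if k < j then -1 else 1) * sgnA A j := by
  have h := sgnA_insert (A.erase k) (j := j) (Finset.notMem_erase k A)
  rw [Finset.insert_erase hk] at h
  rw [h, ← mul_assoc]
  split_ifs <;> norm_num

lemma sgnB_eq (A B : Finset (Fin g)) (j : Fin g) : sgnB A B j = (-1) ^ A.card * sgnA B j := by
  rw [sgnB, sgnA, pow_add]

lemma sgnB_mul_sgnB (A B C : Finset (Fin g)) (j k : Fin g) :
    sgnB A B j * sgnB A C k = sgnA B j * sgnA C k := by
  rw [sgnB_eq, sgnB_eq, mul_mul_mul_comm, ← pow_add, Even.neg_one_pow ⟨_, rfl⟩, one_mul]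

lemma sgnB_insert_left (A B : Finset (Fin g)) {k : Fin g} (hk : k ∉ A) (j : Fin g) :
    sgnB (insert k A) B j = -sgnB A B j := by
  rw [sgnB_eq, sgnB_eq, Finset.card_insert_of_notMem hk, pow_succ]
  ring

lemma sgnB_erase_left (A B : Finset (Fin g)) {k : Fin g} (hk : k ∈ A) (j : Fin g) :
    sgnB (A.erase k) B j = -sgnB A B j := by
  rw [← neg_neg (sgnB (A.erase k) B j), ← sgnB_insert_left _ _ (Finset.notMem_erase k A),
    Finset.insert_erase hk]

lemma dA_mul_mA_add_mA_mul_dA (j k : Fin g) :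
    dA j * mA k + mA k * dA j = if j = k then (1 : Module.End ℚ (XAlg g)) else 0 := by
  refine ext_bas fun ⟨ea, eb, A, B⟩ => ?_
  rcases eq_or_ne j k with rfl | hjk
  · by_cases hj : j ∈ A
    · simp [hj, smul_smul, Finset.insert_erase]
    · simp [hj, smul_smul]
  · rcases hjk.lt_or_gt with hlt | hlt <;> by_cases hj : j ∈ A <;> by_cases hk : k ∈ A <;>
      simp [hj, hk, hjk, hjk.symm, hlt, hlt.not_gt, smul_smul, Finset.erase_insert_of_ne,
        sgnA_insert, sgnA_erase, mul_comm]

lemma dB_mul_mB_add_mB_mul_dB (j k : Fin g) :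
    dB j * mB k + mB k * dB j = if j = k then (1 : Module.End ℚ (XAlg g)) else 0 := by
  refine ext_bas fun ⟨ea, eb, A, B⟩ => ?_
  rcases eq_or_ne j k with rfl | hjk
  · by_cases hj : j ∈ B
    · simp [hj, smul_smul, sgnB_mul_sgnB, Finset.insert_erase]
    · simp [hj, smul_smul, sgnB_mul_sgnB]
  · rcases hjk.lt_or_gt with hlt | hlt <;> by_cases hj : j ∈ B <;> by_cases hk : k ∈ B <;>
      simp [hj, hk, hjk, hjk.symm, hlt, hlt.not_gt, smul_smul, Finset.erase_insert_of_ne,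
        sgnB_mul_sgnB, sgnA_insert, sgnA_erase, mul_comm]

lemma dB_mul_mA_add_mA_mul_dB (j k : Fin g) :
    dB j * mA k + mA k * dB j = (0 : Module.End ℚ (XAlg g)) := by
  refine ext_bas fun ⟨ea, eb, A, B⟩ => ?_
  by_cases hj : j ∈ B <;> by_cases hk : k ∈ A <;>
    simp [hj, hk, smul_smul, sgnB_insert_left, mul_comm]

lemma dA_mul_mB_add_mB_mul_dA (j k : Fin g) :
    dA j * mB k + mB k * dA j = (0 : Module.End ℚ (XAlg g)) := by
  refine ext_bas fun ⟨ea, eb, A, B⟩ => ?_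
  by_cases hj : j ∈ A <;> by_cases hk : k ∈ B <;>
    simp [hj, hk, smul_smul, sgnB_erase_left, mul_comm]

lemma dA_mul_dA_add_dA_mul_dA (j k : Fin g) :
    dA j * dA k + dA k * dA j = (0 : Module.End ℚ (XAlg g)) := by
  refine ext_bas fun ⟨ea, eb, A, B⟩ => ?_
  rcases eq_or_ne j k with rfl | hjk
  · by_cases hj : j ∈ A <;> simp [hj]
  · rcases hjk.lt_or_gt with hlt | hlt <;> by_cases hj : j ∈ A <;> by_cases hk : k ∈ A <;>
      simp [hj, hk, hjk, hjk.symm, hlt, hlt.not_gt, smul_smul, Finset.erase_right_comm,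
        sgnA_erase, mul_comm]

lemma dB_mul_dB_add_dB_mul_dB (j k : Fin g) :
    dB j * dB k + dB k * dB j = (0 : Module.End ℚ (XAlg g)) := by
  refine ext_bas fun ⟨ea, eb, A, B⟩ => ?_
  rcases eq_or_ne j k with rfl | hjk
  · by_cases hj : j ∈ B <;> simp [hj]
  · rcases hjk.lt_or_gt with hlt | hlt <;> by_cases hj : j ∈ B <;> by_cases hk : k ∈ B <;>
      simp [hj, hk, hjk, hjk.symm, hlt, hlt.not_gt, smul_smul, Finset.erase_right_comm,
        sgnB_mul_sgnB, sgnA_erase, mul_comm]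

lemma dA_mul_dB_add_dB_mul_dA (j k : Fin g) :
    dA j * dB k + dB k * dA j = (0 : Module.End ℚ (XAlg g)) := by
  refine ext_bas fun ⟨ea, eb, A, B⟩ => ?_
  by_cases hj : j ∈ A <;> by_cases hk : k ∈ B <;>
    simp [hj, hk, smul_smul, sgnB_erase_left, mul_comm]

lemma commute_dA_dtA (j k : Fin g) : Commute (dA j) (dtA k) := by
  refine ext_bas fun ⟨ea, eb, A, B⟩ => ?_
  by_cases hj : j ∈ A <;> simp [hj, smul_smul, mul_comm]

lemma commute_dA_dtB (j k : Fin g) : Commute (dA j) (dtB k) := by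
  refine ext_bas fun ⟨ea, eb, A, B⟩ => ?_
  by_cases hj : j ∈ A <;> simp [hj, smul_smul, mul_comm]

lemma commute_dB_dtA (j k : Fin g) : Commute (dB j) (dtA k) := by
  refine ext_bas fun ⟨ea, eb, A, B⟩ => ?_
  by_cases hj : j ∈ B <;> simp [hj, smul_smul, mul_comm]

lemma commute_dB_dtB (j k : Fin g) : Commute (dB j) (dtB k) := by
  refine ext_bas fun ⟨ea, eb, A, B⟩ => ?_
  by_cases hj : j ∈ B <;> simp [hj, smul_smul, mul_comm]

lemma hop_eq_sum (g : ℕ) :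
    hop g = ∑ k : Fin g, (mA k * dtA k + mB k * dtB k) := rfl

lemma Δop_eq_sum (g : ℕ) : Δop g = ∑ k : Fin g, dB k * dA k := rfl

lemma hop_summand_mul_Δop_summand_sub (j k : Fin g) :
    (mA k * dtA k + mB k * dtB k) * (dB j * dA j) - dB j * dA j * (mA k * dtA k + mB k * dtB k)
      = if j = k then dA j * dtB j - dB j * dtA j else 0 := by
  rw [add_mul, mul_add, add_sub_add_comm,
    mul_mul_sub_mul_mul_of_commute (commute_dB_dtA j k).symm (commute_dA_dtA j k).symm,
    mul_mul_sub_mul_mul_of_commute (commute_dB_dtB j k).symm (commute_dA_dtB j k).symm,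
    dB_mul_mA_add_mA_mul_dB, dA_mul_mA_add_mA_mul_dA, dB_mul_mB_add_mB_mul_dB,
    dA_mul_mB_add_mB_mul_dA]
  split_ifs with hjk
  · subst hjk
    rw [zero_mul, one_mul, mul_one, mul_zero, sub_zero, sub_mul, zero_mul, zero_sub,
      neg_add_eq_sub]
  · simp

lemma hop_mul_Δop_sub_Δop_mul_hop (g : ℕ) :
    hop g * Δop g - Δop g * hop g = ∑ j : Fin g, (dA j * dtB j - dB j * dtA j) := by
  rw [hop_eq_sum, Δop_eq_sum, Finset.sum_mul_sum, Finset.sum_mul_sum, Finset.sum_comm,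
    ← Finset.sum_sub_distrib]
  refine Finset.sum_congr rfl fun j _ => ?_
  simp only [← Finset.sum_sub_distrib, hop_summand_mul_Δop_summand_sub, Finset.sum_ite_eq,
    Finset.mem_univ, if_true]

lemma commute_hop_mul_Δop_sub_Δop_mul_hop_Δop (g : ℕ) :
    Commute (hop g * Δop g - Δop g * hop g) (Δop g) := by
  rw [hop_mul_Δop_sub_Δop_mul_hop, Δop_eq_sum]
  refine Commute.sum_left _ _ _ fun j _ => Commute.sum_right _ _ _ fun k _ => ?_
  refine Commute.sub_left (Commute.mul_left ?_ ?_) (Commute.mul_left ?_ ?_)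
  · exact commute_mul_of_anticommute (dA_mul_dB_add_dB_mul_dA j k) (dA_mul_dA_add_dA_mul_dA j k)
  · exact ((commute_dB_dtB k j).mul_left (commute_dA_dtB k j)).symm
  · exact commute_mul_of_anticommute (dB_mul_dB_add_dB_mul_dB j k)
      ((add_comm _ _).trans (dA_mul_dB_add_dB_mul_dA k j))
  · exact ((commute_dB_dtA k j).mul_left (commute_dA_dtA k j)).symm

end Mon

open Mon in
/-- On `X = ℚ[ã_i, b̃_i] ⊗ Λ[a_i, b_i]`, the commutator of `h` and `Δ` equals
`Σ_j (∂_{a_j} ∂_{b̃_j} − ∂_{b_j} ∂_{ã_j})`, and consequently `[[h,Δ],Δ] = 0`, i.e.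
`Δ h Δ = ½ (Δ² h + h Δ²)`. -/
theorem h_Delta_commutator (g : ℕ) :
    hop g ∘ₗ Δop g - Δop g ∘ₗ hop g
      = ∑ j : Fin g, (dA j ∘ₗ dtB j - dB j ∘ₗ dtA j) ∧
    Δop g ∘ₗ hop g ∘ₗ Δop g
      = (1 / 2 : ℚ) • (Δop g ∘ₗ Δop g ∘ₗ hop g + hop g ∘ₗ Δop g ∘ₗ Δop g) := by
  simp only [← Module.End.mul_eq_comp]
  exact ⟨hop_mul_Δop_sub_Δop_mul_hop g,
    mul_mul_eq_half_smul_of_commute (commute_hop_mul_Δop_sub_Δop_mul_hop_Δop g)⟩
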